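/- (Strong converse for adaptive discrimination) Suppose lim_{ε→0+} φ(−ε|W‖W̄)/ε = sup_x D(W_x‖W̄_x), where φ(s|W‖W̄) = sup_x φ(s|W_x‖W̄_x). If a sequence (P⃗ⁿ, f_n) satisfies liminf_{n→∞} (−1/n) log E_{Q_{W̄,P⃗ⁿ}}[1−f_n] > sup_x D(W_x‖W̄_x), then E_{Q_{W,P⃗ⁿ}}[1−f_n] → 0. -/

import Mathlib

open Filter

/-- `W` is a (classical) channel from `X` to `Y` with full-support outputs. -/
def IsChannel {X Y : Type*} [Fintype Y] (W : X → Y → ℝ) : Prop :=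
  ∀ x, (∀ y, 0 < W x y) ∧ ∑ y, W x y = 1

/-- An adaptive strategy: for each step `k`, a conditional distribution of the
`(k+1)`-st input given the first `k` input-output pairs. -/
def IsStrategy {X Y : Type*} [Fintype X]
    (strat : (k : ℕ) → (Fin k → X × Y) → X → ℝ) : Prop :=
  ∀ k h, (∀ x, 0 ≤ strat k h x) ∧ ∑ x, strat k h x = 1

/-- Joint distribution of `n` adaptive input-output pairs under channel `W`. -/
noncomputable def Qdist {X Y : Type*} [Fintype X] [Fintype Y] (W : X → Y → ℝ)
    (strat : (k : ℕ) → (Fin k → X × Y) → X → ℝ) (n : ℕ) (h : Fin n → X × Y) : ℝ :=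
  ∏ k : Fin n,
    strat k.1 (fun j : Fin k.1 => h ⟨j.1, j.2.trans k.2⟩) (h k).1 * W (h k).1 (h k).2

/-- Marginal distribution of the `(k+1)`-st input under channel `W`. -/
noncomputable def inMarg {X Y : Type*} [Fintype X] [Fintype Y] (W : X → Y → ℝ)
    (strat : (k : ℕ) → (Fin k → X × Y) → X → ℝ) (k : ℕ) (x : X) : ℝ :=
  ∑ h : Fin k → X × Y, Qdist W strat k h * strat k h x

/-- Kullback–Leibler divergence of finitely supported distributions. -/
noncomputable def Dkl {α : Type*} [Fintype α] (P Q : α → ℝ) : ℝ :=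
  ∑ a, P a * Real.log (P a / Q a)

/-- `φ(s|P‖Q) = log ∑ Q^s P^{1-s}`. -/
noncomputable def phiRel {α : Type*} [Fintype α] (s : ℝ) (P Q : α → ℝ) : ℝ :=
  Real.log (∑ a, Q a ^ s * P a ^ (1 - s))

/-! Choose `D < R < liminf` and `ε > 0` with `Φ := sup_x φ(-ε|W_x‖W̄_x) < ε R`.
The tilted kernel `V = W̄^{-ε} W^{1+ε}` has row masses `exp φ(-ε|W_x‖W̄_x) ≤ exp Φ` and
`W = W̄^{ε/(1+ε)} V^{1/(1+ε)}`; since the adaptive joint distribution is multiplicative in the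
kernel, Hölder's inequality over histories gives
`E_W[1-f_n] ≤ E_W̄[1-f_n]^{ε/(1+ε)} exp(nΦ)^{1/(1+ε)}`, i.e.
`(1+ε) log E_W[1-f_n] ≤ ε log E_W̄[1-f_n] + nΦ`.
As `E_W̄[1-f_n] ≤ exp(-nR)` eventually, `E_W[1-f_n] ≤ exp(-n(εR-Φ)/(1+ε)) → 0`. -/

open Finset Real Topology

lemma mul_rpow_mul_mul_rpow {a u v p q : ℝ} (ha : 0 ≤ a) (hu : 0 ≤ u) (hv : 0 ≤ v)
    (hpq : p + q = 1) : (a * u) ^ p * (a * v) ^ q = a * (u ^ p * v ^ q) := by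
  rw [mul_rpow ha hu, mul_rpow ha hv, mul_mul_mul_comm, ← rpow_add' ha (by simp [hpq]), hpq,
    rpow_one]

lemma sum_rpow_mul_rpow_mul_le {ι : Type*} (s : Finset ι) {f g w : ι → ℝ} (hf : ∀ i, 0 ≤ f i)
    (hg : ∀ i, 0 ≤ g i) (hw : ∀ i, 0 ≤ w i) {p q : ℝ} (hp : 0 < p) (hq : 0 < q)
    (hpq : p + q = 1) :
    ∑ i ∈ s, f i ^ p * g i ^ q * w i ≤ (∑ i ∈ s, f i * w i) ^ p * (∑ i ∈ s, g i * w i) ^ q := by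
  have hpow : ∀ {c : ℝ} (x : ℝ), 0 < c → 0 ≤ x → (x ^ c) ^ (1 / c) = x := fun x hc hx => by
    rw [← rpow_mul hx, mul_one_div_cancel hc.ne', rpow_one]
  calc ∑ i ∈ s, f i ^ p * g i ^ q * w i
      = ∑ i ∈ s, (f i * w i) ^ p * (g i * w i) ^ q := by
        refine sum_congr rfl fun i _ => ?_
        rw [mul_comm (f i), mul_comm (g i), mul_rpow_mul_mul_rpow (hw i) (hf i) (hg i) hpq,
          mul_comm]
    _ ≤ (∑ i ∈ s, ((f i * w i) ^ p) ^ (1 / p)) ^ (1 / (1 / p)) *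
          (∑ i ∈ s, ((g i * w i) ^ q) ^ (1 / q)) ^ (1 / (1 / q)) :=
        inner_le_Lp_mul_Lq_of_nonneg s (holderConjugate_one_div hp hq hpq)
          (fun i _ => by have := hf i; have := hw i; positivity)
          (fun i _ => by have := hg i; have := hw i; positivity)
    _ = (∑ i ∈ s, f i * w i) ^ p * (∑ i ∈ s, g i * w i) ^ q := by
        rw [one_div_one_div, one_div_one_div]
        congr 2
        · exact sum_congr rfl fun i _ => hpow _ hp (mul_nonneg (hf i) (hw i))
        · exact sum_congr rfl fun i _ => hpow _ hq (mul_nonneg (hg i) (hw i))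

lemma eq_rpow_mul_rpow_neg_mul_rpow {w b ε : ℝ} (hw : 0 ≤ w) (hb : 0 < b) (hε : 1 + ε ≠ 0) :
    w = b ^ (ε / (1 + ε)) * (b ^ (-ε) * w ^ (1 - -ε)) ^ (1 / (1 + ε)) := by
  have hexp : ε / (1 + ε) + -ε * (1 / (1 + ε)) = 0 := by ring
  rw [mul_rpow (by positivity) (by positivity), ← rpow_mul hb.le, ← rpow_mul hw, sub_neg_eq_add,
    mul_one_div_cancel hε, rpow_one, ← mul_assoc, ← rpow_add hb, hexp, rpow_zero, one_mul]

section AdaptiveDistribution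

variable {X Y : Type*} [Fintype X] [Fintype Y] {strat : (k : ℕ) → (Fin k → X × Y) → X → ℝ}

lemma Qdist_succ (V : X → Y → ℝ) (n : ℕ) (H : Fin (n + 1) → X × Y) :
    Qdist V strat (n + 1) H = Qdist V strat n (Fin.init H) *
      (strat n (Fin.init H) (H (Fin.last n)).1 * V (H (Fin.last n)).1 (H (Fin.last n)).2) :=
  Fin.prod_univ_castSucc _

lemma Qdist_nonneg {V : X → Y → ℝ} (hs : IsStrategy strat) (hV : ∀ x y, 0 ≤ V x y) (n : ℕ)
    (h : Fin n → X × Y) : 0 ≤ Qdist V strat n h :=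
  prod_nonneg fun _ _ => mul_nonneg ((hs _ _).1 _) (hV _ _)

lemma sum_strat_mul_le {V : X → Y → ℝ} {M : ℝ} (hs : IsStrategy strat)
    (hrow : ∀ x, ∑ y, V x y ≤ M) (k : ℕ) (h : Fin k → X × Y) :
    ∑ z : X × Y, strat k h z.1 * V z.1 z.2 ≤ M :=
  calc ∑ z : X × Y, strat k h z.1 * V z.1 z.2 = ∑ x, strat k h x * ∑ y, V x y := by
        simp only [Fintype.sum_prod_type, mul_sum]
    _ ≤ ∑ x, strat k h x * M := sum_le_sum fun x _ =>
        mul_le_mul_of_nonneg_left (hrow x) ((hs k h).1 x)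
    _ = M := by rw [← sum_mul, (hs k h).2, one_mul]

lemma sum_Qdist_le_pow {V : X → Y → ℝ} {M : ℝ} (hs : IsStrategy strat) (hV : ∀ x y, 0 ≤ V x y)
    (hM : 0 ≤ M) (hrow : ∀ x, ∑ y, V x y ≤ M) (n : ℕ) :
    ∑ h : Fin n → X × Y, Qdist V strat n h ≤ M ^ n := by
  induction n with
  | zero => simp [Qdist]
  | succ n ih =>
    rw [← (Fin.snocEquiv fun _ => X × Y).sum_comp, Fintype.sum_prod_type, sum_comm]
    simp only [Fin.snocEquiv, Equiv.coe_fn_mk, Qdist_succ, Fin.init_snoc, Fin.snoc_last,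
      ← mul_sum]
    calc ∑ h : Fin n → X × Y, Qdist V strat n h * ∑ z : X × Y, strat n h z.1 * V z.1 z.2
        ≤ ∑ h : Fin n → X × Y, Qdist V strat n h * M := sum_le_sum fun h _ =>
          mul_le_mul_of_nonneg_left (sum_strat_mul_le hs hrow n h) (Qdist_nonneg hs hV n h)
      _ ≤ M ^ n * M := by rw [← sum_mul]; exact mul_le_mul_of_nonneg_right ih hM
      _ = M ^ (n + 1) := (pow_succ M n).symm

lemma sum_Qdist_mul_le_pow {V : X → Y → ℝ} {M : ℝ} (hs : IsStrategy strat)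
    (hV : ∀ x y, 0 ≤ V x y) (hM : 0 ≤ M) (hrow : ∀ x, ∑ y, V x y ≤ M) {n : ℕ}
    {g : (Fin n → X × Y) → ℝ} (hg : ∀ h, g h ≤ 1) :
    ∑ h, Qdist V strat n h * g h ≤ M ^ n :=
  (sum_le_sum fun h _ => mul_le_of_le_one_right (Qdist_nonneg hs hV n h) (hg h)).trans
    (sum_Qdist_le_pow hs hV hM hrow n)

lemma Qdist_rpow_mul_rpow {U V : X → Y → ℝ} (hs : IsStrategy strat) (hU : ∀ x y, 0 ≤ U x y)
    (hV : ∀ x y, 0 ≤ V x y) {p q : ℝ} (hpq : p + q = 1) (n : ℕ) (h : Fin n → X × Y) :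
    Qdist (fun x y => U x y ^ p * V x y ^ q) strat n h =
      Qdist U strat n h ^ p * Qdist V strat n h ^ q := by
  unfold Qdist
  rw [← finsetProd_rpow _ _ (fun _ _ => mul_nonneg ((hs _ _).1 _) (hU _ _)),
    ← finsetProd_rpow _ _ (fun _ _ => mul_nonneg ((hs _ _).1 _) (hV _ _)),
    ← prod_mul_distrib]
  exact prod_congr rfl fun k _ =>
    (mul_rpow_mul_mul_rpow ((hs _ _).1 _) (hU _ _) (hV _ _) hpq).symm

lemma sum_Qdist_mul_le_of_phiRel_le {W Wb : X → Y → ℝ} (hs : IsStrategy strat)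
    (hW : ∀ x y, 0 ≤ W x y) (hWb : ∀ x y, 0 < Wb x y) {ε Φ : ℝ} (hε : 0 < ε)
    (hΦ : ∀ x, phiRel (-ε) (W x) (Wb x) ≤ Φ) {n : ℕ} {g : (Fin n → X × Y) → ℝ}
    (hg0 : ∀ h, 0 ≤ g h) (hg1 : ∀ h, g h ≤ 1) :
    ∑ h, Qdist W strat n h * g h ≤
      (∑ h, Qdist Wb strat n h * g h) ^ (ε / (1 + ε)) * (exp Φ ^ n) ^ (1 / (1 + ε)) := by
  -- `1 - -ε` makes `∑ y, V x y` literally the argument of the logarithm in `phiRel (-ε)`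
  set V : X → Y → ℝ := fun x y => Wb x y ^ (-ε) * W x y ^ (1 - -ε)
  have hWb' : ∀ x y, 0 ≤ Wb x y := fun x y => (hWb x y).le
  have hV : ∀ x y, 0 ≤ V x y := fun x y => by have := hW x y; have := hWb x y; positivity
  have hWV : W = fun x y => Wb x y ^ (ε / (1 + ε)) * V x y ^ (1 / (1 + ε)) :=
    funext₂ fun x y => eq_rpow_mul_rpow_neg_mul_rpow (hW x y) (hWb x y) (by positivity)
  have hsplit : ε / (1 + ε) + 1 / (1 + ε) = 1 := by field_simp; ring
  have hrow : ∀ x, ∑ y, V x y ≤ exp Φ := fun x => (le_exp_log _).trans (exp_le_exp.2 (hΦ x))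
  calc ∑ h, Qdist W strat n h * g h
      = ∑ h, Qdist Wb strat n h ^ (ε / (1 + ε)) * Qdist V strat n h ^ (1 / (1 + ε)) * g h := by
        rw [hWV]
        simp only [Qdist_rpow_mul_rpow hs hWb' hV hsplit]
    _ ≤ (∑ h, Qdist Wb strat n h * g h) ^ (ε / (1 + ε)) *
          (∑ h, Qdist V strat n h * g h) ^ (1 / (1 + ε)) :=
        sum_rpow_mul_rpow_mul_le _ (Qdist_nonneg hs hWb' n) (Qdist_nonneg hs hV n) hg0
          (by positivity) (by positivity) hsplit
    _ ≤ (∑ h, Qdist Wb strat n h * g h) ^ (ε / (1 + ε)) * (exp Φ ^ n) ^ (1 / (1 + ε)) := by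
        refine mul_le_mul_of_nonneg_left (rpow_le_rpow ?_ ?_ (by positivity)) (rpow_nonneg ?_ _)
        · exact sum_nonneg fun h _ => mul_nonneg (Qdist_nonneg hs hV n h) (hg0 h)
        · exact sum_Qdist_mul_le_pow hs hV (exp_pos Φ).le hrow hg1
        · exact sum_nonneg fun h _ => mul_nonneg (Qdist_nonneg hs hWb' n h) (hg0 h)

end AdaptiveDistribution

lemma eventually_le_exp_of_lt_liminf {β : ℕ → ℝ} {R : ℝ} (hβ0 : ∀ n, 0 ≤ β n)
    (hβ1 : ∀ n, β n ≤ 1)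
    (hR : R < liminf (fun n : ℕ => (-1 / (n : ℝ)) * log (β n)) atTop) :
    ∀ᶠ n in atTop, β n ≤ exp (-(n * R)) := by
  have hbdd : IsBoundedUnder (· ≥ ·) atTop fun n : ℕ => (-1 / (n : ℝ)) * log (β n) :=
    isBoundedUnder_of ⟨0, fun n => by
      rw [neg_div, neg_mul, ← mul_neg]
      exact mul_nonneg (by positivity) (neg_nonneg.2 (log_nonpos (hβ0 n) (hβ1 n)))⟩
  filter_upwards [eventually_lt_of_lt_liminf hR hbdd, eventually_gt_atTop 0] with n hn hn0
  rcases (hβ0 n).eq_or_lt with h0 | hpos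
  · rw [← h0]; positivity
  rw [← log_le_iff_le_exp hpos]
  have hn0' : (0 : ℝ) < n := Nat.cast_pos.2 hn0
  rw [neg_div, neg_mul, lt_neg, one_div_mul_eq_div, div_lt_iff₀ hn0'] at hn
  linarith

lemma tendsto_zero_of_le_exp_neg_mul {a : ℕ → ℝ} {c : ℝ} (ha : ∀ n, 0 ≤ a n) (hc : 0 < c)
    (h : ∀ᶠ n in atTop, a n ≤ exp (-(c * n))) : Tendsto a atTop (𝓝 0) :=
  tendsto_of_tendsto_of_tendsto_of_le_of_le' tendsto_const_nhds
    (tendsto_exp_neg_atTop_nhds_zero.comp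
      (tendsto_natCast_atTop_atTop.const_mul_atTop hc)) (.of_forall ha) h

theorem stmt14_general {X Y : Type*} [Fintype X] [Fintype Y]
    (W Wb : X → Y → ℝ) (hW : IsChannel W) (hWb : IsChannel Wb)
    (hphi : Tendsto
      (fun ε : ℝ => (⨆ x, phiRel (-ε) (W x) (Wb x)) / ε)
      (nhdsWithin 0 (Set.Ioi 0)) (nhds (⨆ x, Dkl (W x) (Wb x))))
    (strats : ℕ → (k : ℕ) → (Fin k → X × Y) → X → ℝ)
    (hstrats : ∀ n, IsStrategy (strats n))
    (f : (n : ℕ) → (Fin n → X × Y) → ℝ)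
    (hf : ∀ n h, f n h ∈ Set.Icc (0 : ℝ) 1)
    (hrate : (⨆ x, Dkl (W x) (Wb x)) <
      Filter.liminf (fun n : ℕ => (-1 / (n : ℝ)) *
        Real.log (∑ h : Fin n → X × Y, Qdist Wb (strats n) n h * (1 - f n h)))
        atTop) :
    Tendsto
      (fun n => ∑ h : Fin n → X × Y, Qdist W (strats n) n h * (1 - f n h))
      atTop (nhds 0) := by
  obtain ⟨R, hDR, hR⟩ := exists_between hrate
  obtain ⟨ε, hεR, hε : 0 < ε⟩ :=
    ((hphi.eventually (gt_mem_nhds hDR)).and self_mem_nhdsWithin).exists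
  set Φ := ⨆ x, phiRel (-ε) (W x) (Wb x)
  have hΦR : Φ < ε * R := by rwa [div_lt_iff₀ hε, mul_comm] at hεR
  have hWnn : ∀ x y, 0 ≤ W x y := fun x y => ((hW x).1 y).le
  have hWbnn : ∀ x y, 0 ≤ Wb x y := fun x y => ((hWb x).1 y).le
  have hg0 : ∀ n h, 0 ≤ 1 - f n h := fun n h => sub_nonneg.2 (hf n h).2
  have hg1 : ∀ n h, 1 - f n h ≤ 1 := fun n h => sub_le_self _ (hf n h).1
  have hβ0 : ∀ n, 0 ≤ ∑ h, Qdist Wb (strats n) n h * (1 - f n h) := fun n =>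
    sum_nonneg fun h _ => mul_nonneg (Qdist_nonneg (hstrats n) hWbnn n h) (hg0 n h)
  have hβ1 : ∀ n, ∑ h, Qdist Wb (strats n) n h * (1 - f n h) ≤ 1 := fun n => by
    simpa using
      sum_Qdist_mul_le_pow (hstrats n) hWbnn zero_le_one (fun x => (hWb x).2.le) (hg1 n)
  have hβ := eventually_le_exp_of_lt_liminf hβ0 hβ1 hR
  refine tendsto_zero_of_le_exp_neg_mul (c := (ε * R - Φ) / (1 + ε))
    (fun n => sum_nonneg fun h _ => mul_nonneg (Qdist_nonneg (hstrats n) hWnn n h) (hg0 n h))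
    (div_pos (by linarith) (by linarith)) ?_
  filter_upwards [hβ] with n hβn
  calc _ ≤ _ := sum_Qdist_mul_le_of_phiRel_le (hstrats n) hWnn (fun x => (hWb x).1) hε
        (le_ciSup (f := fun x => phiRel (-ε) (W x) (Wb x)) (Finite.bddAbove_range _))
        (hg0 n) (hg1 n)
    _ ≤ exp (-(n * R)) ^ (ε / (1 + ε)) * (exp Φ ^ n) ^ (1 / (1 + ε)) := by
      gcongr
      exact hβ0 n
    _ = exp (-((ε * R - Φ) / (1 + ε) * n)) := by
      rw [← exp_nat_mul, ← exp_mul, ← exp_mul, ← exp_add]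
      congr 1
      field_simp
      ring

theorem stmt14 {X Y : Type*} [Fintype X] [Fintype Y] [Nonempty X]
    (W Wb : X → Y → ℝ) (hW : IsChannel W) (hWb : IsChannel Wb)
    (hphi : Tendsto
      (fun ε : ℝ => (⨆ x, phiRel (-ε) (W x) (Wb x)) / ε)
      (nhdsWithin 0 (Set.Ioi 0)) (nhds (⨆ x, Dkl (W x) (Wb x))))
    (strats : ℕ → (k : ℕ) → (Fin k → X × Y) → X → ℝ)
    (hstrats : ∀ n, IsStrategy (strats n))
    (f : (n : ℕ) → (Fin n → X × Y) → ℝ)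
    (hf : ∀ n h, f n h ∈ Set.Icc (0 : ℝ) 1)
    (hrate : (⨆ x, Dkl (W x) (Wb x)) <
      Filter.liminf (fun n : ℕ => (-1 / (n : ℝ)) *
        Real.log (∑ h : Fin n → X × Y, Qdist Wb (strats n) n h * (1 - f n h)))
        atTop) :
    Tendsto
      (fun n => ∑ h : Fin n → X × Y, Qdist W (strats n) n h * (1 - f n h))
      atTop (nhds 0) :=
  stmt14_general W Wb hW hWb hphi strats hstrats f hf hrate
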